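/- arXiv:2306.17481 — 5 statements merged into one kernel-verified Lean document; each statement's English description precedes it below -/
import Mathlib

section
/- Let N ≥ 2 and n ≥ 1 be integers and let W = (w_ij) be an N×N real matrix with nonnegative entries that is doubly stochastic (W1 = 1 and 1ᵀW = 1ᵀ), such that for all i ≠ j one has w_ij > 0 if and only if w_ji > 0, such that w_ii > 0 for at least one index i, and such that the graph on {1,…,N} having an edge between i ≠ j whenever w_ij > 0 is connected. Then the spectral norm β := ‖W − (1/N)11ᵀ‖₂ (largest singular value) satisfies β < 1, and for every x ∈ ℝ^{N×n} one has ‖Wx − X̄‖ ≤ β‖x − X̄‖, where ‖·‖ is the Frobenius norm and X̄ ∈ ℝ^{N×n} is the matrix all of whose rows equal the row-average x̄ := (1/N)Σ_{i=1}^N x_i of the rows x_i of x. -/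
open scoped BigOperators RealInnerProductSpace
open MeasureTheory

/-- Frobenius norm of a real `N × n` matrix. -/
noncomputable def fnorm {N n : ℕ} (x : Matrix (Fin N) (Fin n) ℝ) : ℝ :=
  Real.sqrt (∑ i, ∑ j, (x i j) ^ 2)

/-- The row-average `x̄ = (1/N) ∑ᵢ xᵢ` of the rows of a matrix. -/
noncomputable def rowAvg {N n : ℕ} (x : Matrix (Fin N) (Fin n) ℝ) : Fin n → ℝ :=
  fun j => (∑ i, x i j) / N

/-- The matrix `X̄` all of whose rows equal the row-average of `x`. -/
noncomputable def avgMat {N n : ℕ} (x : Matrix (Fin N) (Fin n) ℝ) :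
    Matrix (Fin N) (Fin n) ℝ :=
  Matrix.of fun _ j => rowAvg x j

/-- The matrix all of whose rows equal the vector `v`. -/
def constMat (N : ℕ) {n : ℕ} (v : EuclideanSpace ℝ (Fin n)) : Matrix (Fin N) (Fin n) ℝ :=
  Matrix.of fun _ j => v j

/-- The spectral norm (largest singular value) of a square real matrix, i.e. its
operator norm as a linear map between Euclidean spaces. -/
noncomputable def specNorm {N : ℕ} (M : Matrix (Fin N) (Fin N) ℝ) : ℝ :=
  ‖LinearMap.toContinuousLinearMap (Matrix.toEuclideanLin M)‖

/-- The matrix `(1/N) 1 1ᵀ`. -/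
noncomputable def Jmat (N : ℕ) : Matrix (Fin N) (Fin N) ℝ :=
  Matrix.of fun _ _ => (N : ℝ)⁻¹

/-- `∇F(x)`: the matrix whose `i`-th row is `∇ fᵢ(xᵢ)`, `xᵢ` being the `i`-th row of `x`. -/
noncomputable def gradF {N n : ℕ} (f : Fin N → EuclideanSpace ℝ (Fin n) → ℝ)
    (x : Matrix (Fin N) (Fin n) ℝ) : Matrix (Fin N) (Fin n) ℝ :=
  Matrix.of fun i j => gradient (f i) (WithLp.toLp 2 (fun j' => x i j')) j

/-!
For doubly stochastic `W`, a row-wise variance computation gives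
`‖W u‖² = ‖u‖² - ½ ∑ᵢ ∑ⱼ ∑ₖ wᵢⱼ wᵢₖ (uⱼ - uₖ)²`. The defect vanishes only if `u` is constant on
the support of every row; a positive diagonal entry, symmetric support and connectivity then make
`u` constant, hence `0` when `∑ u = 0`. As `(W - J) v = W (v - J v)` and `v - J v` is the centred
part of `v`, `W - J` strictly shrinks every nonzero vector, and compactness of the unit sphere
gives `β < 1`. The Frobenius bound follows column by column from `(W - J)(x - X̄) = W x - X̄`.
-/

open Finset Matrix

theorem SimpleGraph.Connected.forall_of_adj {V : Type*} {G : SimpleGraph V} (hG : G.Connected)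
    {p : V → Prop} (hstep : ∀ a b, G.Adj a b → p a → p b) {a : V} (ha : p a) (b : V) : p b := by
  obtain ⟨w⟩ := hG a b
  induction w with
  | nil => exact ha
  | cons hadj _ ih => exact ih (hstep _ _ hadj ha)

theorem ContinuousLinearMap.opNorm_lt_of_forall_norm_eq_one {E F : Type*} [NormedAddCommGroup E]
    [NormedSpace ℝ E] [FiniteDimensional ℝ E] [SeminormedAddCommGroup F] [NormedSpace ℝ F]
    (f : E →L[ℝ] F) {c : ℝ} (hc : 0 < c) (h : ∀ x, ‖x‖ = 1 → ‖f x‖ < c) : ‖f‖ < c := by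
  rcases subsingleton_or_nontrivial E with hE | hE
  · rwa [Subsingleton.elim f 0, norm_zero]
  obtain ⟨u, hu, hmax⟩ := (isCompact_sphere (0 : E) 1).exists_isMaxOn
    (NormedSpace.sphere_nonempty.2 zero_le_one) (continuous_norm.comp f.continuous).continuousOn
  have hu1 : ‖u‖ = 1 := by simpa using hu
  exact (f.opNorm_le_of_unit_norm (norm_nonneg _) fun x hx => hmax (by simpa using hx)).trans_lt
    (h u hu1)

theorem exists_forall_eq_of_eq_on_rowSupport {ι : Type*} {W : Matrix ι ι ℝ}
    (hsupp : ∀ i j, i ≠ j → (0 < W i j ↔ 0 < W j i)) (hdiag : ∃ i, 0 < W i i)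
    (hconn : (SimpleGraph.fromRel fun i j => 0 < W i j).Connected) {u : ι → ℝ}
    (hu : ∀ i j k, 0 < W i j → 0 < W i k → u j = u k) : ∃ c, ∀ a, u a = c := by
  obtain ⟨i₀, hi₀⟩ := hdiag
  -- The invariant passes along edges because `W a b > 0` and `W b a > 0` put `b` in the support
  -- of row `a` and `a` in that of row `b`.
  refine ⟨u i₀, fun b => (hconn.forall_of_adj
    (p := fun a => u a = u i₀ ∧ ∀ y, 0 < W a y → u y = u i₀) ?_
    ⟨rfl, fun y hy => hu i₀ y i₀ hy hi₀⟩ b).1⟩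
  rintro a b hab ⟨ha, hrow⟩
  obtain ⟨hne, hab | hba⟩ := SimpleGraph.fromRel_adj _ a b |>.1 hab
  · exact ⟨hrow b hab, fun y hy => (hu b y a hy ((hsupp a b hne).1 hab)).trans ha⟩
  · exact ⟨hrow b ((hsupp a b hne).2 hba), fun y hy => (hu b y a hy hba).trans ha⟩

section DoublyStochastic

variable {ι : Type*} [Fintype ι]

theorem sum_sub_sq_eq_of_sum_eq {v : ι → ℝ} {c : ℝ}
    (hc : ∑ i, v i = Fintype.card ι * c) :
    ∑ i, (v i - c) ^ 2 = ∑ i, v i ^ 2 - Fintype.card ι * c ^ 2 := by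
  simp only [sub_sq, sum_add_distrib, sum_sub_distrib, ← sum_mul, ← mul_sum, mul_assoc, hc,
    sum_const, card_univ, nsmul_eq_mul]
  ring

theorem sum_sum_mul_mul_sub_sq {w : ι → ℝ} (hw : ∑ j, w j = 1) (u : ι → ℝ) :
    ∑ j, ∑ k, w j * w k * (u j - u k) ^ 2
      = 2 * (∑ j, w j * u j ^ 2 - (∑ j, w j * u j) ^ 2) := by
  have hterm : ∀ j k, w j * w k * (u j - u k) ^ 2
      = w j * u j ^ 2 * w k + w j * (w k * u k ^ 2) - 2 * (w j * u j) * (w k * u k) :=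
    fun j k => by ring
  simp only [hterm, sum_add_distrib, sum_sub_distrib, ← mul_sum, ← sum_mul, hw]
  ring

theorem sum_sq_mulVec_eq {W : Matrix ι ι ℝ} (hrow : ∀ i, ∑ j, W i j = 1)
    (hcol : ∀ j, ∑ i, W i j = 1) (u : ι → ℝ) :
    ∑ i, (W *ᵥ u) i ^ 2
      = ∑ j, u j ^ 2 - (1 / 2) * ∑ i, ∑ j, ∑ k, W i j * W i k * (u j - u k) ^ 2 := by
  have hrow_sq : ∀ i, (W *ᵥ u) i ^ 2
      = ∑ j, W i j * u j ^ 2 - (1 / 2) * ∑ j, ∑ k, W i j * W i k * (u j - u k) ^ 2 := by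
    intro i
    rw [sum_sum_mul_mul_sub_sq (hrow i), Matrix.mulVec, dotProduct]
    ring
  simp only [hrow_sq, sum_sub_distrib, ← mul_sum]
  rw [sum_comm (f := fun i j => W i j * u j ^ 2)]
  simp only [← sum_mul, hcol, one_mul]

theorem sum_sq_mulVec_lt {W : Matrix ι ι ℝ} (hnonneg : ∀ i j, 0 ≤ W i j)
    (hrow : ∀ i, ∑ j, W i j = 1) (hcol : ∀ j, ∑ i, W i j = 1)
    (hsupp : ∀ i j, i ≠ j → (0 < W i j ↔ 0 < W j i)) (hdiag : ∃ i, 0 < W i i)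
    (hconn : (SimpleGraph.fromRel fun i j => 0 < W i j).Connected) {u : ι → ℝ}
    (hsum : ∑ i, u i = 0) (hu : u ≠ 0) :
    ∑ i, (W *ᵥ u) i ^ 2 < ∑ i, u i ^ 2 := by
  have hterm : ∀ i j k, 0 ≤ W i j * W i k * (u j - u k) ^ 2 := fun i j k =>
    mul_nonneg (mul_nonneg (hnonneg i j) (hnonneg i k)) (sq_nonneg _)
  have hpos : 0 < ∑ i, ∑ j, ∑ k, W i j * W i k * (u j - u k) ^ 2 := by
    obtain ⟨i, j, k, hij, hik, hjk⟩ : ∃ i j k, 0 < W i j ∧ 0 < W i k ∧ u j ≠ u k := by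
      by_contra! hconst
      obtain ⟨c, hc⟩ := exists_forall_eq_of_eq_on_rowSupport hsupp hdiag hconn hconst
      obtain ⟨i₀, -⟩ := hdiag
      have hcard : (Fintype.card ι : ℝ) * c = 0 := by simpa [hc] using hsum
      have hc0 : c = 0 :=
        (mul_eq_zero.1 hcard).resolve_left (Nat.cast_ne_zero.2 (Fintype.card_pos_iff.2 ⟨i₀⟩).ne')
      exact hu (funext fun a => by simp [hc, hc0])
    have hijk : 0 < W i j * W i k * (u j - u k) ^ 2 := by
      have := sub_ne_zero.2 hjk
      positivity
    refine sum_pos' (fun i _ => sum_nonneg fun j _ => sum_nonneg fun k _ => hterm i j k)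
      ⟨i, mem_univ _, sum_pos' (fun j _ => sum_nonneg fun k _ => hterm i j k)
        ⟨j, mem_univ _, sum_pos' (fun k _ => hterm i j k) ⟨k, mem_univ _, hijk⟩⟩⟩
  rw [sum_sq_mulVec_eq hrow hcol]
  linarith

end DoublyStochastic

theorem sum_sq_mulVec_le_specNorm {N : ℕ} (M : Matrix (Fin N) (Fin N) ℝ) (v : Fin N → ℝ) :
    ∑ i, (M *ᵥ v) i ^ 2 ≤ specNorm M ^ 2 * ∑ i, v i ^ 2 := by
  have h := pow_le_pow_left₀ (norm_nonneg _)
    ((LinearMap.toContinuousLinearMap (Matrix.toEuclideanLin M)).le_opNorm (WithLp.toLp 2 v)) 2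
  rwa [mul_pow, EuclideanSpace.real_norm_sq_eq, EuclideanSpace.real_norm_sq_eq] at h

theorem specNorm_lt_one_of_sum_sq_mulVec_lt {N : ℕ} {M : Matrix (Fin N) (Fin N) ℝ}
    (h : ∀ v : Fin N → ℝ, v ≠ 0 → ∑ i, (M *ᵥ v) i ^ 2 < ∑ i, v i ^ 2) : specNorm M < 1 := by
  refine ContinuousLinearMap.opNorm_lt_of_forall_norm_eq_one _ one_pos fun x hx => ?_
  have hx0 : x.ofLp ≠ 0 := by
    rintro h0
    simp [(WithLp.ofLp_eq_zero 2).1 h0] at hx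
  have hlt : ‖LinearMap.toContinuousLinearMap (Matrix.toEuclideanLin M) x‖ ^ 2 < ‖x‖ ^ 2 := by
    rw [EuclideanSpace.real_norm_sq_eq, EuclideanSpace.real_norm_sq_eq]
    exact h _ hx0
  rw [hx, one_pow] at hlt
  exact (pow_lt_one_iff_of_nonneg (norm_nonneg _) two_ne_zero).1 hlt

theorem fnorm_mul_le {N n : ℕ} (M : Matrix (Fin N) (Fin N) ℝ) (y : Matrix (Fin N) (Fin n) ℝ) :
    fnorm (M * y) ≤ specNorm M * fnorm y := by
  have hcol : ∀ j, ∑ i, (M * y) i j ^ 2 ≤ specNorm M ^ 2 * ∑ i, y i j ^ 2 := fun j =>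
    sum_sq_mulVec_le_specNorm M fun i => y i j
  have hβ : 0 ≤ specNorm M := norm_nonneg _
  rw [fnorm, fnorm, ← Real.sqrt_sq hβ, ← Real.sqrt_mul (sq_nonneg _),
    sum_comm, sum_comm (f := fun i j => y i j ^ 2), mul_sum]
  exact Real.sqrt_le_sqrt (sum_le_sum fun j _ => hcol j)

section Averaging

variable {N n : ℕ}

theorem Jmat_mul (x : Matrix (Fin N) (Fin n) ℝ) : Jmat N * x = avgMat x := by
  ext i j
  simp [Jmat, avgMat, rowAvg, mul_apply, ← mul_sum, div_eq_inv_mul]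

theorem Jmat_mulVec (v : Fin N → ℝ) : Jmat N *ᵥ v = fun _ => (∑ j, v j) / N := by
  funext i
  simp [Jmat, mulVec, dotProduct, ← mul_sum, div_eq_inv_mul]

theorem mul_avgMat {W : Matrix (Fin N) (Fin N) ℝ} (hrow : ∀ i, ∑ j, W i j = 1)
    (x : Matrix (Fin N) (Fin n) ℝ) : W * avgMat x = avgMat x := by
  ext i j
  simp [avgMat, mul_apply, ← sum_mul, hrow]

theorem Jmat_eq_avgMat_one : Jmat N = avgMat (1 : Matrix (Fin N) (Fin N) ℝ) := by
  ext i j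
  simp [Jmat, avgMat, rowAvg, one_apply]

theorem mul_Jmat {W : Matrix (Fin N) (Fin N) ℝ} (hrow : ∀ i, ∑ j, W i j = 1) :
    W * Jmat N = Jmat N := by
  rw [Jmat_eq_avgMat_one, mul_avgMat hrow]

theorem sum_Jmat_row (hN : (N : ℝ) ≠ 0) (i : Fin N) : ∑ j, Jmat N i j = 1 := by
  simp [Jmat, hN]

theorem sub_Jmat_mul_sub_avgMat {W : Matrix (Fin N) (Fin N) ℝ} (hrow : ∀ i, ∑ j, W i j = 1)
    (hN : (N : ℝ) ≠ 0) (x : Matrix (Fin N) (Fin n) ℝ) :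
    (W - Jmat N) * (x - avgMat x) = W * x - avgMat x := by
  rw [Matrix.sub_mul, Matrix.mul_sub, Matrix.mul_sub, Jmat_mul, mul_avgMat hrow,
    mul_avgMat (sum_Jmat_row hN)]
  abel

theorem sum_sq_sub_Jmat_mulVec_lt {W : Matrix (Fin N) (Fin N) ℝ} (hnonneg : ∀ i j, 0 ≤ W i j)
    (hrow : ∀ i, ∑ j, W i j = 1) (hcol : ∀ j, ∑ i, W i j = 1)
    (hsupp : ∀ i j, i ≠ j → (0 < W i j ↔ 0 < W j i)) (hdiag : ∃ i, 0 < W i i)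
    (hconn : (SimpleGraph.fromRel fun i j => 0 < W i j).Connected) (hN : (N : ℝ) ≠ 0)
    {v : Fin N → ℝ} (hv : v ≠ 0) :
    ∑ i, ((W - Jmat N) *ᵥ v) i ^ 2 < ∑ i, v i ^ 2 := by
  set c := (∑ j, v j) / N
  have hc : ∑ j, v j = Fintype.card (Fin N) * c := by
    rw [Fintype.card_fin, mul_div_cancel₀ _ hN]
  set u := v - Jmat N *ᵥ v with hu_def
  have hu : u = fun i => v i - c := by rw [hu_def, Jmat_mulVec]; rfl
  have hWu : (W - Jmat N) *ᵥ v = W *ᵥ u := by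
    rw [sub_mulVec, mulVec_sub, mulVec_mulVec, mul_Jmat hrow]
  have hsum : ∑ i, u i = 0 := by
    simp [hu, sum_sub_distrib, hc]
  have hle : ∑ i, u i ^ 2 ≤ ∑ i, v i ^ 2 := by
    rw [hu, sum_sub_sq_eq_of_sum_eq hc]
    have : 0 ≤ (Fintype.card (Fin N) : ℝ) * c ^ 2 := by positivity
    linarith
  rw [hWu]
  by_cases hu0 : u = 0
  · obtain ⟨i, hi⟩ := Function.ne_iff.1 hv
    simpa [hu0] using sum_pos' (fun i _ => sq_nonneg (v i)) ⟨i, mem_univ _, sq_pos_of_ne_zero hi⟩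
  · exact (sum_sq_mulVec_lt hnonneg hrow hcol hsupp hdiag hconn hsum hu0).trans_le hle

end Averaging

theorem stmt0_general (N n : ℕ)
    (W : Matrix (Fin N) (Fin N) ℝ)
    (hnonneg : ∀ i j, 0 ≤ W i j)
    (hrow : ∀ i, ∑ j, W i j = 1) (hcol : ∀ j, ∑ i, W i j = 1)
    (hsupp : ∀ i j, i ≠ j → (0 < W i j ↔ 0 < W j i))
    (hdiag : ∃ i, 0 < W i i)
    (hconn : (SimpleGraph.fromRel fun i j => 0 < W i j).Connected) :
    specNorm (W - Jmat N) < 1 ∧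
      ∀ x : Matrix (Fin N) (Fin n) ℝ,
        fnorm (W * x - avgMat x) ≤ specNorm (W - Jmat N) * fnorm (x - avgMat x) := by
  have hN : (N : ℝ) ≠ 0 := by
    obtain ⟨i, -⟩ := hdiag
    exact Nat.cast_ne_zero.2 i.pos.ne'
  refine ⟨specNorm_lt_one_of_sum_sq_mulVec_lt fun v hv =>
    sum_sq_sub_Jmat_mulVec_lt hnonneg hrow hcol hsupp hdiag hconn hN hv, fun x => ?_⟩
  rw [← sub_Jmat_mul_sub_avgMat hrow hN]
  exact fnorm_mul_le _ _

/-- **Lemma 4.1 (Pu–Nedić).** For a nonnegative doubly stochastic mixing matrix `W` with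
symmetric positive support, positive diagonal entry at some index, and connected
communication graph, the spectral norm `β` of `W - (1/N)11ᵀ` satisfies `β < 1` and
`‖Wx - X̄‖ ≤ β ‖x - X̄‖` for every `x ∈ ℝ^{N×n}` (Frobenius norm). -/
theorem stmt0 (N n : ℕ) (hN : 2 ≤ N) (hn : 1 ≤ n)
    (W : Matrix (Fin N) (Fin N) ℝ)
    (hnonneg : ∀ i j, 0 ≤ W i j)
    (hrow : ∀ i, ∑ j, W i j = 1) (hcol : ∀ j, ∑ i, W i j = 1)
    (hsupp : ∀ i j, i ≠ j → (0 < W i j ↔ 0 < W j i))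
    (hdiag : ∃ i, 0 < W i i)
    (hconn : (SimpleGraph.fromRel fun i j => 0 < W i j).Connected) :
    specNorm (W - Jmat N) < 1 ∧
      ∀ x : Matrix (Fin N) (Fin n) ℝ,
        fnorm (W * x - avgMat x) ≤ specNorm (W - Jmat N) * fnorm (x - avgMat x) :=
  stmt0_general N n W hnonneg hrow hcol hsupp hdiag hconn
end

section
/- Let (A_k)_{k≥0} and (B_k)_{k≥0} be sequences of nonnegative real numbers, and let a, p ∈ (0, 1] and b, d, e ≥ 0 be real numbers such that for all k ≥ 0: A_{k+1} ≤ (1 − a)A_k + b·B_k + e and B_{k+1} ≤ (1 − p)B_k + d. Then for all k ≥ 1: A_k ≤ (1 − a)^k A_0 + k·b·(max{1 − a, 1 − p})^{k−1}·B_0 + b·d/(a·p) + e/a. -/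
/-- Abstract coupled linear recursion lemma (core iteration argument of Section 5). -/
theorem stmt10 (A B : ℕ → ℝ) (hA : ∀ k, 0 ≤ A k) (hB : ∀ k, 0 ≤ B k)
    (a p : ℝ) (ha0 : 0 < a) (ha1 : a ≤ 1) (hp0 : 0 < p) (hp1 : p ≤ 1)
    (b d e : ℝ) (hb : 0 ≤ b) (hd : 0 ≤ d) (he : 0 ≤ e)
    (hrecA : ∀ k, A (k + 1) ≤ (1 - a) * A k + b * B k + e)
    (hrecB : ∀ k, B (k + 1) ≤ (1 - p) * B k + d) :
    ∀ k, 1 ≤ k →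
      A k ≤ (1 - a) ^ k * A 0 + k * b * max (1 - a) (1 - p) ^ (k - 1) * B 0
        + b * d / (a * p) + e / a := by
  have hM0 : (0:ℝ) ≤ max (1 - a) (1 - p) := le_max_of_le_left (by linarith)
  have hMa : (1 - a) ≤ max (1 - a) (1 - p) := le_max_left _ _
  have hMp : (1 - p) ≤ max (1 - a) (1 - p) := le_max_right _ _
  set M := max (1 - a) (1 - p) with hM
  -- bound on B
  have hBk : ∀ k, B k ≤ (1 - p) ^ k * B 0 + d / p := by
    intro k
    induction k with
    | zero => simp; positivity
    | succ n ih =>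
      calc B (n + 1) ≤ (1 - p) * B n + d := hrecB n
        _ ≤ (1 - p) * ((1 - p) ^ n * B 0 + d / p) + d := by
            have h1p : (0:ℝ) ≤ 1 - p := by linarith
            nlinarith [hB n]
        _ = (1 - p) ^ (n + 1) * B 0 + d / p := by
            field_simp; ring
  intro k hk
  induction k, hk using Nat.le_induction with
  | base =>
      have h1 := hrecA 0
      have hbd : 0 ≤ b * d / (a * p) := by positivity
      have hea : e ≤ e / a := by
        rw [le_div_iff₀ ha0]; nlinarith
      simp only [pow_one, Nat.sub_self, pow_zero]
      push_cast
      nlinarith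
  | succ n hn ih =>
      have h1p : (0:ℝ) ≤ 1 - a := by linarith
      have hMn : (0:ℝ) ≤ M ^ (n - 1) := pow_nonneg hM0 _
      have key : (1 - a) * (↑n * b * M ^ (n - 1) * B 0) + b * ((1 - p) ^ n * B 0)
          ≤ (↑n + 1) * b * M ^ n * B 0 := by
        have e1 : (1 - a) * M ^ (n - 1) ≤ M ^ n := by
          calc (1 - a) * M ^ (n - 1) ≤ M * M ^ (n - 1) := by nlinarith
            _ = M ^ n := by
                rw [← pow_succ']
                congr 1
                omega
        have e2 : (1 - p) ^ n ≤ M ^ n :=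
          pow_le_pow_left₀ (by linarith) hMp n
        have hB0 := hB 0
        have hn0 : (0:ℝ) ≤ (n:ℝ) := Nat.cast_nonneg n
        nlinarith [mul_nonneg (mul_nonneg hb hB0) (sub_nonneg.mpr e2),
          mul_nonneg (mul_nonneg (mul_nonneg hn0 hb) hB0) (sub_nonneg.mpr e1)]
      have hd1 : (1 - a) * (b * d / (a * p)) + b * (d / p) = b * d / (a * p) := by
        field_simp; ring
      have he1 : (1 - a) * (e / a) + e = e / a := by
        field_simp; ring
      calc A (n + 1) ≤ (1 - a) * A n + b * B n + e := hrecA n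
        _ ≤ (1 - a) * ((1 - a) ^ n * A 0 + ↑n * b * M ^ (n - 1) * B 0
              + b * d / (a * p) + e / a)
            + b * ((1 - p) ^ n * B 0 + d / p) + e := by nlinarith [hBk n, ih]
        _ ≤ (1 - a) ^ (n + 1) * A 0 + (↑n + 1) * b * M ^ n * B 0
            + b * d / (a * p) + e / a := by
            rw [pow_succ']
            nlinarith
        _ = (1 - a) ^ (n + 1) * A 0 + ↑(n + 1) * b * M ^ (n + 1 - 1) * B 0
            + b * d / (a * p) + e / a := by push_cast; ring_nf
end

section
/- Let L, μ, c, α, ε, σ, C, R be positive real numbers, η := μL/(μ+L), and assume αε ≤ 2/(μ+L) and cε ≤ 2. Let (A_k)_{k≥0} and (B_k)_{k≥0} be nonnegative real sequences satisfying, for all k ≥ 0: A_k ≤ R, A_{k+1} ≤ (1 − 3ηαε/2)A_k + Lαε(1/4 + L/(2η))B_k + Nε²σ², and B_{k+1} ≤ (1 − cε/2)B_k + (3L²α²ε/c)(A_k + C²) + 4Nε²σ², where N is a positive integer. Then for all k ≥ 1: B_k ≤ (1 − cε/2)^k B_0 + (2/c)[(3L²α²/c)(R + C²) + 4Nεσ²],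 and A_k ≤ (1 − 3ηαε/2)^k A_0 + k·Lαε(1/4 + L/(2η))·(max{1 − 3ηαε/2, 1 − cε/2})^{k−1}·B_0 + (4L/(3ηc))(1/4 + L/(2η))[(3L²α²/c)(R + C²) + 4Nεσ²] + 2Nεσ²/(3ηα). -/
/-!
Both bounds come from unrolling a contracting linear recursion. Since `A k ≤ R`, the recursion
for `B` has constant forcing, so `B k` decays like `(1 - cε/2)^k` to within its fixed point
`2/c · (…)`. Inserting that bound into the recursion for `A`, the transient part of `B` feeds at
most `k · m^(k-1)` copies of `B 0` into `A k`, with `m` the larger of the two contraction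
factors, and the constant part of `B` together with the noise term moves the fixed point of `A`.
-/

section LinearRecursion

variable {𝕜 : Type*} [CommRing 𝕜] [LinearOrder 𝕜] [IsStrictOrderedRing 𝕜]

theorem le_pow_mul_add_of_le_mul_add {x : ℕ → 𝕜} {ρ d S : 𝕜} (hρ : 0 ≤ ρ) (hS : 0 ≤ S)
    (hfix : ρ * S + d ≤ S) (hx : ∀ k, x (k + 1) ≤ ρ * x k + d) (k : ℕ) :
    x k ≤ ρ ^ k * x 0 + S := by
  induction k with
  | zero => simpa using hS
  | succ k ih =>
    calc x (k + 1) ≤ ρ * (ρ ^ k * x 0 + S) + d := (hx k).trans (by gcongr)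
      _ = ρ ^ (k + 1) * x 0 + (ρ * S + d) := by ring
      _ ≤ ρ ^ (k + 1) * x 0 + S := by gcongr

theorem nat_mul_mul_pow_pred_le {ρ m : 𝕜} (hρ : 0 ≤ ρ) (hρm : ρ ≤ m) (k : ℕ) :
    k * (ρ * m ^ (k - 1)) ≤ k * m ^ k := by
  rcases k with _ | k
  · simp
  · gcongr
    calc ρ * m ^ k ≤ m * m ^ k := mul_le_mul_of_nonneg_right hρm (pow_nonneg (hρ.trans hρm) k)
      _ = m ^ (k + 1) := by ring

theorem le_pow_mul_add_nat_mul_pow_mul_add {x y : ℕ → 𝕜} {ρ m β d S T : 𝕜} (hρ : 0 ≤ ρ)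
    (hρm : ρ ≤ m) (hβ : 0 ≤ β) (hy0 : 0 ≤ y 0) (hT : 0 ≤ T) (hfix : ρ * T + β * S + d ≤ T)
    (hy : ∀ k, y k ≤ m ^ k * y 0 + S) (hx : ∀ k, x (k + 1) ≤ ρ * x k + β * y k + d) (k : ℕ) :
    x k ≤ ρ ^ k * x 0 + k * β * m ^ (k - 1) * y 0 + T := by
  induction k with
  | zero => simpa using hT
  | succ k ih =>
    have hpow : k * (ρ * m ^ (k - 1)) * (β * y 0) ≤ k * m ^ k * (β * y 0) :=
      mul_le_mul_of_nonneg_right (nat_mul_mul_pow_pred_le hρ hρm k) (mul_nonneg hβ hy0)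
    calc x (k + 1)
        ≤ ρ * (ρ ^ k * x 0 + k * β * m ^ (k - 1) * y 0 + T) + β * (m ^ k * y 0 + S) + d :=
          (hx k).trans (by gcongr; exact hy k)
      _ = ρ ^ (k + 1) * x 0 + k * (ρ * m ^ (k - 1)) * (β * y 0) + β * m ^ k * y 0
            + (ρ * T + β * S + d) := by ring
      _ ≤ ρ ^ (k + 1) * x 0 + ↑(k + 1) * β * m ^ (k + 1 - 1) * y 0 + T := by
          push_cast
          linarith

end LinearRecursion

theorem mul_div_add_mul_two_div_add_le_half {𝕜 : Type*} [Field 𝕜] [LinearOrder 𝕜]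
    [IsStrictOrderedRing 𝕜] {a b : 𝕜} (ha : 0 < a) (hb : 0 < b) :
    a * b / (a + b) * (2 / (a + b)) ≤ 1 / 2 := by
  rw [div_mul_div_comm, div_le_div_iff₀ (by positivity) (by norm_num)]
  nlinarith [four_mul_le_sq_add a b]

theorem stmt11_general (L μ c α ε σ C R : ℝ) (N : ℕ)
    (hL : 0 < L) (hμ : 0 < μ) (hc : 0 < c) (hα : 0 < α) (hε : 0 < ε)
    (hR : 0 < R)
    (η : ℝ) (hη : η = μ * L / (μ + L))
    (hαε : α * ε ≤ 2 / (μ + L)) (hcε : c * ε ≤ 2)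
    (A B : ℕ → ℝ) (hB0 : ∀ k, 0 ≤ B k)
    (hAR : ∀ k, A k ≤ R)
    (hrecA : ∀ k, A (k + 1) ≤ (1 - 3 * η * α * ε / 2) * A k
      + L * α * ε * (1 / 4 + L / (2 * η)) * B k + N * ε ^ 2 * σ ^ 2)
    (hrecB : ∀ k, B (k + 1) ≤ (1 - c * ε / 2) * B k
      + 3 * L ^ 2 * α ^ 2 * ε / c * (A k + C ^ 2) + 4 * N * ε ^ 2 * σ ^ 2) :
    ∀ k, 1 ≤ k →
      B k ≤ (1 - c * ε / 2) ^ k * B 0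
          + 2 / c * (3 * L ^ 2 * α ^ 2 / c * (R + C ^ 2) + 4 * N * ε * σ ^ 2) ∧
      A k ≤ (1 - 3 * η * α * ε / 2) ^ k * A 0
          + k * (L * α * ε * (1 / 4 + L / (2 * η))) *
            max (1 - 3 * η * α * ε / 2) (1 - c * ε / 2) ^ (k - 1) * B 0
          + 4 * L / (3 * η * c) * (1 / 4 + L / (2 * η)) *
            (3 * L ^ 2 * α ^ 2 / c * (R + C ^ 2) + 4 * N * ε * σ ^ 2)
          + 2 * N * ε * σ ^ 2 / (3 * η * α) := by
  have hηpos : 0 < η := by rw [hη]; positivity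
  have hηαε : η * α * ε ≤ 1 / 2 := by
    rw [mul_assoc, hη]
    exact (mul_le_mul_of_nonneg_left hαε (by positivity)).trans
      (mul_div_add_mul_two_div_add_le_half hμ hL)
  set Q := 3 * L ^ 2 * α ^ 2 / c * (R + C ^ 2) + 4 * N * ε * σ ^ 2 with hQ
  have hB : ∀ k, B k ≤ (1 - c * ε / 2) ^ k * B 0 + 2 / c * Q := by
    refine le_pow_mul_add_of_le_mul_add
      (d := 3 * L ^ 2 * α ^ 2 * ε / c * (R + C ^ 2) + 4 * N * ε ^ 2 * σ ^ 2)
      (by linarith) (by positivity) (le_of_eq ?_) fun k => (hrecB k).trans ?_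
    · rw [hQ]
      field_simp
      ring
    · rw [add_assoc]
      gcongr
      linarith [hAR k]
  have hA := le_pow_mul_add_nat_mul_pow_mul_add (S := 2 / c * Q)
    (T := 4 * L / (3 * η * c) * (1 / 4 + L / (2 * η)) * Q + 2 * N * ε * σ ^ 2 / (3 * η * α))
    (by linarith) (le_max_left _ _) (by positivity) (hB0 0) (by positivity) (le_of_eq ?_)
    (fun k => (hB k).trans (by gcongr; exacts [hB0 0, by linarith, le_max_right _ _])) hrecA
  · exact fun k _ => ⟨hB k, by linarith [hA k]⟩
  · rw [hQ]
    field_simp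
    ring

/-- Sequence-level form of Theorem 2 (thm-1) of the paper for quantization of type 1. -/
theorem stmt11 (L μ c α ε σ C R : ℝ) (N : ℕ) (hNpos : 0 < N)
    (hL : 0 < L) (hμ : 0 < μ) (hc : 0 < c) (hα : 0 < α) (hε : 0 < ε)
    (hσ : 0 < σ) (hC : 0 < C) (hR : 0 < R)
    (η : ℝ) (hη : η = μ * L / (μ + L))
    (hαε : α * ε ≤ 2 / (μ + L)) (hcε : c * ε ≤ 2)
    (A B : ℕ → ℝ) (hA0 : ∀ k, 0 ≤ A k) (hB0 : ∀ k, 0 ≤ B k)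
    (hAR : ∀ k, A k ≤ R)
    (hrecA : ∀ k, A (k + 1) ≤ (1 - 3 * η * α * ε / 2) * A k
      + L * α * ε * (1 / 4 + L / (2 * η)) * B k + N * ε ^ 2 * σ ^ 2)
    (hrecB : ∀ k, B (k + 1) ≤ (1 - c * ε / 2) * B k
      + 3 * L ^ 2 * α ^ 2 * ε / c * (A k + C ^ 2) + 4 * N * ε ^ 2 * σ ^ 2) :
    ∀ k, 1 ≤ k →
      B k ≤ (1 - c * ε / 2) ^ k * B 0
          + 2 / c * (3 * L ^ 2 * α ^ 2 / c * (R + C ^ 2) + 4 * N * ε * σ ^ 2) ∧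
      A k ≤ (1 - 3 * η * α * ε / 2) ^ k * A 0
          + k * (L * α * ε * (1 / 4 + L / (2 * η))) *
            max (1 - 3 * η * α * ε / 2) (1 - c * ε / 2) ^ (k - 1) * B 0
          + 4 * L / (3 * η * c) * (1 / 4 + L / (2 * η)) *
            (3 * L ^ 2 * α ^ 2 / c * (R + C ^ 2) + 4 * N * ε * σ ^ 2)
          + 2 * N * ε * σ ^ 2 / (3 * η * α) :=
  stmt11_general L μ c α ε σ C R N hL hμ hc hα hε hR η hη hαε hcε A B hB0 hAR hrecA hrecB
end

section
/- Let L, μ, c, α, ε, σ, C, P, R, R′ be positive real numbers, η := μL/(μ+L), and assume αε ≤ 2/(μ+L) and cε ≤ 2. Let (A_k)_{k≥0} and (B_k)_{k≥0} be nonnegative real sequences satisfying, for all k ≥ 0: A_k ≤ R, B_k ≤ R′, A_{k+1} ≤ (1 − 3ηαε/2)A_k + Lαε(1/4 + L/(2η))B_k + 2ε²σ²(A_k + B_k + P), and B_{k+1} ≤ (1 − cε/2)B_k + (3L²α²ε/c)(A_k + C²) + 8ε²σ²(A_k + B_k + P). Then, with S := R + R′ + P, for all k ≥ 1: B_k ≤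 (1 − cε/2)^k B_0 + (2/c)[(3L²α²/c)(R + C²) + 8εσ²S], and A_k ≤ (1 − 3ηαε/2)^k A_0 + k·Lαε(1/4 + L/(2η))·(max{1 − 3ηαε/2, 1 − cε/2})^{k−1}·B_0 + (4L/(3ηc))(1/4 + L/(2η))[(3L²α²/c)(R + C²) + 8εσ²S] + 4Sεσ²/(3ηα). -/
/-!
Bounding `A k ≤ R` and `B k ≤ R'` inside the noise terms turns both recursions into
linear recursions `x (k + 1) ≤ p * x k + a * q ^ k + d` with contraction factors
`p = 1 - 3ηαε/2` and `q = 1 - cε/2`, which lie in `[0, 1)` because `μL/(μ+L) ≤ (μ+L)/4`.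
Unrolled, such a recursion gives `p ^ k * x 0 + ∑_{i<k} p ^ (k-1-i) * (a * q ^ i) + d / (1 - p)`,
and each of the `k` summands is at most `a * max p q ^ (k - 1)`. For `B` the forcing is constant; its
bound then makes the forcing of `A` geometric in `q`.
-/

theorem le_pow_mul_add_of_le_mul_add_mul_pow_add {p q a d : ℝ} {x : ℕ → ℝ}
    (hp₀ : 0 ≤ p) (hp₁ : p < 1) (hq : 0 ≤ q) (ha : 0 ≤ a) (hd : 0 ≤ d)
    (hx : ∀ k, x (k + 1) ≤ p * x k + a * q ^ k + d) (k : ℕ) :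
    x k ≤ p ^ k * x 0 + k * max p q ^ (k - 1) * a + d / (1 - p) := by
  set m := max p q
  induction k with
  | zero => simpa using div_nonneg hd (sub_nonneg.2 hp₁.le)
  | succ k ih =>
    have hpm : p * (k * m ^ (k - 1)) ≤ k * m ^ k := by
      rcases k with _ | j
      · simp
      · rw [Nat.add_sub_cancel, pow_succ, mul_left_comm, mul_comm (m ^ j)]
        gcongr
        exact le_max_left p q
    have hqm : q ^ k ≤ m ^ k := pow_le_pow_left₀ hq (le_max_right p q) k
    have hd' : p * (d / (1 - p)) + d = d / (1 - p) := by
      field_simp [(sub_pos.2 hp₁).ne']; ring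
    calc x (k + 1) ≤ p * x k + a * q ^ k + d := hx k
      _ ≤ p * (p ^ k * x 0 + k * m ^ (k - 1) * a + d / (1 - p)) + a * q ^ k + d := by
        gcongr
      _ ≤ p ^ (k + 1) * x 0 + (k + 1 : ℕ) * m ^ (k + 1 - 1) * a + d / (1 - p) := by
        rw [Nat.add_sub_cancel, pow_succ]; push_cast
        linarith [mul_le_mul_of_nonneg_right hpm ha, mul_le_mul_of_nonneg_left hqm ha]

theorem le_pow_mul_add_of_le_mul_add_s12 {p d : ℝ} {x : ℕ → ℝ}
    (hp₀ : 0 ≤ p) (hp₁ : p < 1) (hd : 0 ≤ d)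
    (hx : ∀ k, x (k + 1) ≤ p * x k + d) (k : ℕ) :
    x k ≤ p ^ k * x 0 + d / (1 - p) := by
  simpa using le_pow_mul_add_of_le_mul_add_mul_pow_add hp₀ hp₁ le_rfl le_rfl hd
    (by simpa using hx) k

theorem mul_div_add_mul_le_half {μ L t : ℝ} (hμ : 0 < μ) (hL : 0 < L) (ht₀ : 0 ≤ t)
    (ht : t ≤ 2 / (μ + L)) : μ * L / (μ + L) * t ≤ 1 / 2 := by
  have hμL : 0 < μ + L := by linarith
  have hamgm : μ * L / (μ + L) ≤ (μ + L) / 4 := by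
    rw [div_le_iff₀ hμL]; nlinarith [sq_nonneg (μ - L)]
  calc μ * L / (μ + L) * t ≤ (μ + L) / 4 * (2 / (μ + L)) := by gcongr
    _ = 1 / 2 := by field_simp; ring

theorem stmt12_general (L μ c α ε σ C P R R' : ℝ)
    (hL : 0 < L) (hμ : 0 < μ) (hc : 0 < c) (hα : 0 < α) (hε : 0 < ε)
    (hP : 0 < P) (hR : 0 < R) (hR' : 0 < R')
    (η : ℝ) (hη : η = μ * L / (μ + L))
    (hαε : α * ε ≤ 2 / (μ + L)) (hcε : c * ε ≤ 2)
    (A B : ℕ → ℝ) (hB0 : ∀ k, 0 ≤ B k)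
    (hAR : ∀ k, A k ≤ R) (hBR : ∀ k, B k ≤ R')
    (hrecA : ∀ k, A (k + 1) ≤ (1 - 3 * η * α * ε / 2) * A k
      + L * α * ε * (1 / 4 + L / (2 * η)) * B k
      + 2 * ε ^ 2 * σ ^ 2 * (A k + B k + P))
    (hrecB : ∀ k, B (k + 1) ≤ (1 - c * ε / 2) * B k
      + 3 * L ^ 2 * α ^ 2 * ε / c * (A k + C ^ 2)
      + 8 * ε ^ 2 * σ ^ 2 * (A k + B k + P)) :
    ∀ k, 1 ≤ k →
      B k ≤ (1 - c * ε / 2) ^ k * B 0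
          + 2 / c * (3 * L ^ 2 * α ^ 2 / c * (R + C ^ 2)
            + 8 * ε * σ ^ 2 * (R + R' + P)) ∧
      A k ≤ (1 - 3 * η * α * ε / 2) ^ k * A 0
          + k * (L * α * ε * (1 / 4 + L / (2 * η))) *
            max (1 - 3 * η * α * ε / 2) (1 - c * ε / 2) ^ (k - 1) * B 0
          + 4 * L / (3 * η * c) * (1 / 4 + L / (2 * η)) *
            (3 * L ^ 2 * α ^ 2 / c * (R + C ^ 2) + 8 * ε * σ ^ 2 * (R + R' + P))
          + 4 * (R + R' + P) * ε * σ ^ 2 / (3 * η * α) := by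
  intro k _
  have hη₀ : 0 < η := hη ▸ by positivity
  have hηαε : η * (α * ε) ≤ 1 / 2 := hη ▸ mul_div_add_mul_le_half hμ hL (by positivity) hαε
  set S := R + R' + P
  set E := 3 * L ^ 2 * α ^ 2 / c * (R + C ^ 2) + 8 * ε * σ ^ 2 * S
  have hp₀ : 0 ≤ 1 - 3 * η * α * ε / 2 := by linarith
  have hp₁ : 1 - 3 * η * α * ε / 2 < 1 := by linarith [mul_pos (mul_pos hη₀ hα) hε]
  have hq₀ : 0 ≤ 1 - c * ε / 2 := by linarith
  have hq₁ : 1 - c * ε / 2 < 1 := by linarith [mul_pos hc hε]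
  have hB : ∀ k, B k ≤ (1 - c * ε / 2) ^ k * B 0 + 2 / c * E := by
    have hrec : ∀ i, B (i + 1) ≤ (1 - c * ε / 2) * B i + ε * E := fun i =>
      calc B (i + 1) ≤ _ := hrecB i
        _ ≤ (1 - c * ε / 2) * B i + 3 * L ^ 2 * α ^ 2 * ε / c * (R + C ^ 2)
            + 8 * ε ^ 2 * σ ^ 2 * S := by
          gcongr <;> linarith [hAR i, hBR i]
        _ = _ := by ring
    intro k
    refine (le_pow_mul_add_of_le_mul_add_s12 hq₀ hq₁ (by positivity) hrec k).trans_eq ?_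
    field_simp; ring
  refine ⟨hB k, ?_⟩
  set F := L * α * ε * (1 / 4 + L / (2 * η)) with hF
  have hrec : ∀ i, A (i + 1) ≤ (1 - 3 * η * α * ε / 2) * A i + F * B 0 * (1 - c * ε / 2) ^ i
      + (F * (2 / c * E) + 2 * ε ^ 2 * σ ^ 2 * S) := fun i =>
    calc A (i + 1) ≤ _ := hrecA i
      _ ≤ (1 - 3 * η * α * ε / 2) * A i + F * ((1 - c * ε / 2) ^ i * B 0 + 2 / c * E)
          + 2 * ε ^ 2 * σ ^ 2 * S := by
        gcongr
        · exact hB i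
        · linarith [hAR i, hBR i]
      _ = _ := by ring
  refine (le_pow_mul_add_of_le_mul_add_mul_pow_add hp₀ hp₁ hq₀
    (mul_nonneg (by rw [hF]; positivity) (hB0 0)) (by rw [hF]; positivity) hrec k).trans_eq ?_
  rw [hF]; field_simp; ring

/-- Sequence-level form of Theorem 2 (thm-1) of the paper for quantization of type 2. -/
theorem stmt12 (L μ c α ε σ C P R R' : ℝ)
    (hL : 0 < L) (hμ : 0 < μ) (hc : 0 < c) (hα : 0 < α) (hε : 0 < ε)
    (hσ : 0 < σ) (hC : 0 < C) (hP : 0 < P) (hR : 0 < R) (hR' : 0 < R')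
    (η : ℝ) (hη : η = μ * L / (μ + L))
    (hαε : α * ε ≤ 2 / (μ + L)) (hcε : c * ε ≤ 2)
    (A B : ℕ → ℝ) (hA0 : ∀ k, 0 ≤ A k) (hB0 : ∀ k, 0 ≤ B k)
    (hAR : ∀ k, A k ≤ R) (hBR : ∀ k, B k ≤ R')
    (hrecA : ∀ k, A (k + 1) ≤ (1 - 3 * η * α * ε / 2) * A k
      + L * α * ε * (1 / 4 + L / (2 * η)) * B k
      + 2 * ε ^ 2 * σ ^ 2 * (A k + B k + P))
    (hrecB : ∀ k, B (k + 1) ≤ (1 - c * ε / 2) * B k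
      + 3 * L ^ 2 * α ^ 2 * ε / c * (A k + C ^ 2)
      + 8 * ε ^ 2 * σ ^ 2 * (A k + B k + P)) :
    ∀ k, 1 ≤ k →
      B k ≤ (1 - c * ε / 2) ^ k * B 0
          + 2 / c * (3 * L ^ 2 * α ^ 2 / c * (R + C ^ 2)
            + 8 * ε * σ ^ 2 * (R + R' + P)) ∧
      A k ≤ (1 - 3 * η * α * ε / 2) ^ k * A 0
          + k * (L * α * ε * (1 / 4 + L / (2 * η))) *
            max (1 - 3 * η * α * ε / 2) (1 - c * ε / 2) ^ (k - 1) * B 0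
          + 4 * L / (3 * η * c) * (1 / 4 + L / (2 * η)) *
            (3 * L ^ 2 * α ^ 2 / c * (R + C ^ 2) + 8 * ε * σ ^ 2 * (R + R' + P))
          + 4 * (R + R' + P) * ε * σ ^ 2 / (3 * η * α) :=
  stmt12_general L μ c α ε σ C P R R' hL hμ hc hα hε hP hR hR' η hη hαε hcε A B hB0 hAR hBR hrecA
    hrecB
end

section
/- Let L, μ, c, α, ε, σ > 0, C, P ≥ 0, η := μL/(μ+L), and set q := η²/(L(η + 2L)). Assume αε ≤ 2/(μ+L), ε ≤ min{1/(2c), α, ηα/(4σ²)}, (3/c)L²α² + 16εσ² ≤ qc/4, and let R > 0 satisfy R ≥ 8σ²P/η and R ≥ (4/(qc))[(3L²α²/c)C² + 8εσ²P]. Let (A_k)_{k≥0} and (B_k)_{k≥0} be nonnegative real sequences with A_0 ≤ R and B_0 ≤ qR satisfying, for all k ≥ 0: A_{k+1} ≤ (1 − 3ηαε/2)A_k + Lαε(1/4 + L/(2η))B_k + 2ε²σ²(A_k + B_k + P), and B_{k+1} ≤ (1 − cε/2)B_k + (3L²α²ε/c)(A_k + C²) + 8ε²σ²(A_k + B_k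 + P). If moreover μ ≤ L (so that q ≤ 1/2), then A_k ≤ R and B_k ≤ qR for all k ≥ 0. -/
/-!
The box `[0, R] × [0, qR]` is invariant under the recursion: its right-hand sides are monotone in
`(A k, B k)`, so it suffices to check that the corner `(R, qR)` is mapped into the box. For the first
coordinate the choice of `q` makes the coupling term `Lαε(1/4 + L/(2η)) qR` equal to `ηαεR/4`, and the
noise is absorbed by `εσ² ≤ ηα/4` and `8σ²P ≤ ηR`; for the second coordinate the contraction
`cεqR/2` absorbs the rest by the two halves `qc/4` of the assumptions on `α, ε` and on `R`.
-/

theorem forall_le_and_le_of_monotone_recurrence {α : Type*} [Preorder α] {A B : ℕ → α}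
    {f g : α → α → α} {R S : α}
    (hf : ∀ ⦃a a' b b'⦄, a ≤ a' → b ≤ b' → f a b ≤ f a' b')
    (hg : ∀ ⦃a a' b b'⦄, a ≤ a' → b ≤ b' → g a b ≤ g a' b')
    (hA : ∀ k, A (k + 1) ≤ f (A k) (B k)) (hB : ∀ k, B (k + 1) ≤ g (A k) (B k))
    (hfR : f R S ≤ R) (hgS : g R S ≤ S) (hA₀ : A 0 ≤ R) (hB₀ : B 0 ≤ S) :
    ∀ k, A k ≤ R ∧ B k ≤ S := by
  intro k
  induction k with
  | zero => exact ⟨hA₀, hB₀⟩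
  | succ k ih =>
    obtain ⟨hAk, hBk⟩ := ih
    exact ⟨(hA k).trans ((hf hAk hBk).trans hfR), (hB k).trans ((hg hAk hBk).trans hgS)⟩

section HarmonicMean

variable {μ L : ℝ}

theorem mul_div_add_le_right (h : 0 < μ + L) : μ * L / (μ + L) ≤ L := by
  rw [div_le_iff₀ h]
  nlinarith [sq_nonneg L]

theorem four_mul_mul_div_add_le (h : 0 < μ + L) : 4 * (μ * L / (μ + L)) ≤ μ + L := by
  rw [← mul_div_assoc, div_le_iff₀ h]
  nlinarith [sq_nonneg (μ - L)]

end HarmonicMean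

section CouplingConstant

variable {η L : ℝ}

theorem sq_div_mul_add_le_half (hη : 0 ≤ η) (hηL : η ≤ L) :
    η ^ 2 / (L * (η + 2 * L)) ≤ 1 / 2 := by
  rcases hη.eq_or_lt with rfl | hη
  · simp
  have hL : 0 < L := hη.trans_le hηL
  rw [div_le_iff₀ (by positivity)]
  nlinarith [mul_le_mul_of_nonneg_left hηL hη.le]

theorem mul_quarter_add_div_mul_sq_div (hη : 0 < η) (hL : 0 < L) :
    L * (1 / 4 + L / (2 * η)) * (η ^ 2 / (L * (η + 2 * L))) = η / 4 := by
  field_simp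
  ring

end CouplingConstant

theorem corner_bound_fst {η α ε s q R P : ℝ} (hη : 0 < η) (hα : 0 < α) (hε : 0 < ε)
    (hR : 0 ≤ R) (hq₀ : 0 ≤ q) (hq : q ≤ 1 / 2) (hεs : ε * s ≤ η * α / 4)
    (hPR : 8 * s * P ≤ η * R) (hεα : ε ≤ α) :
    (1 - 3 * η * α * ε / 2) * R + η * α * ε / 4 * R + 2 * ε ^ 2 * s * (R + q * R + P) ≤ R := by
  have hηαεR : 0 ≤ η * α * ε * R := by positivity
  have hRq : 2 * ε ^ 2 * s * (R + q * R) ≤ 3 / 4 * (η * α * ε * R) := by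
    nlinarith [mul_le_mul_of_nonneg_right hεs (by positivity : 0 ≤ (1 + q) * (ε * R)),
      mul_le_mul_of_nonneg_left hq hηαεR]
  have hP : 2 * ε ^ 2 * s * P ≤ 1 / 4 * (η * α * ε * R) := by
    have : 0 ≤ η * ε * R := by positivity
    nlinarith [mul_le_mul_of_nonneg_left hPR (sq_nonneg ε), mul_le_mul_of_nonneg_left hεα this]
  nlinarith

theorem corner_bound_snd {D ε s q c R P K : ℝ} (hε : 0 < ε) (hs : 0 ≤ s)
    (hR : 0 ≤ R) (hq : q ≤ 1 / 2) (hsmall : D + 16 * ε * s ≤ q * c / 4)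
    (hK : D * K + 8 * ε * s * P ≤ q * c * R / 4) :
    (1 - c * ε / 2) * (q * R) + D * ε * (R + K) + 8 * ε ^ 2 * s * (R + q * R + P) ≤ q * R := by
  have hεsR : 0 ≤ ε ^ 2 * s * R := by positivity
  nlinarith [mul_le_mul_of_nonneg_right hsmall (by positivity : 0 ≤ ε * R),
    mul_le_mul_of_nonneg_right hK hε.le, mul_le_mul_of_nonneg_left hq hεsR]

theorem stmt14_general (L μ c α ε σ : ℝ) (C P : ℝ)
    (hL : 0 < L) (hμ : 0 < μ) (hc : 0 < c) (hα : 0 < α) (hε : 0 < ε)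
    (hσ : 0 < σ)
    (η q : ℝ) (hη : η = μ * L / (μ + L)) (hq : q = η ^ 2 / (L * (η + 2 * L)))
    (hαε : α * ε ≤ 2 / (μ + L)) (hεc : ε ≤ 1 / (2 * c)) (hεα : ε ≤ α)
    (hεσ : ε ≤ η * α / (4 * σ ^ 2))
    (hsmall : 3 / c * L ^ 2 * α ^ 2 + 16 * ε * σ ^ 2 ≤ q * c / 4)
    (R : ℝ) (hR : 0 < R) (hR1 : 8 * σ ^ 2 * P / η ≤ R)
    (hR2 : 4 / (q * c) * (3 * L ^ 2 * α ^ 2 / c * C ^ 2 + 8 * ε * σ ^ 2 * P) ≤ R)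
    (A B : ℕ → ℝ)
    (hA0R : A 0 ≤ R) (hB0R : B 0 ≤ q * R)
    (hrecA : ∀ k, A (k + 1) ≤ (1 - 3 * η * α * ε / 2) * A k
      + L * α * ε * (1 / 4 + L / (2 * η)) * B k
      + 2 * ε ^ 2 * σ ^ 2 * (A k + B k + P))
    (hrecB : ∀ k, B (k + 1) ≤ (1 - c * ε / 2) * B k
      + 3 * L ^ 2 * α ^ 2 * ε / c * (A k + C ^ 2)
      + 8 * ε ^ 2 * σ ^ 2 * (A k + B k + P)) :
    ∀ k, A k ≤ R ∧ B k ≤ q * R := by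
  have hμL : 0 < μ + L := by positivity
  have hη₀ : 0 < η := hη ▸ by positivity
  have hq₀ : 0 < q := hq ▸ by positivity
  have hq_half : q ≤ 1 / 2 := hq ▸ sq_div_mul_add_le_half hη₀.le (hη ▸ mul_div_add_le_right hμL)
  have hcoupling : L * (1 / 4 + L / (2 * η)) * q = η / 4 := hq ▸ mul_quarter_add_div_mul_sq_div hη₀ hL
  have hηαε : η * α * ε ≤ 1 / 2 := by
    nlinarith [(le_div_iff₀ hμL).1 hαε, hη ▸ four_mul_mul_div_add_le hμL, mul_pos hα hε]
  have hcε : c * ε ≤ 1 / 2 := by linarith [(le_div_iff₀ (by positivity)).1 hεc]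
  refine forall_le_and_le_of_monotone_recurrence
    (f := fun a b ↦ (1 - 3 * η * α * ε / 2) * a + L * α * ε * (1 / 4 + L / (2 * η)) * b
      + 2 * ε ^ 2 * σ ^ 2 * (a + b + P))
    (g := fun a b ↦ (1 - c * ε / 2) * b + 3 * L ^ 2 * α ^ 2 * ε / c * (a + C ^ 2)
      + 8 * ε ^ 2 * σ ^ 2 * (a + b + P))
    (fun _ _ _ _ ha hb ↦ by gcongr; linarith) (fun _ _ _ _ ha hb ↦ by gcongr; linarith)
    hrecA hrecB ?_ ?_ hA0R hB0R
  · calc _ = (1 - 3 * η * α * ε / 2) * R + η * α * ε / 4 * R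
          + 2 * ε ^ 2 * σ ^ 2 * (R + q * R + P) := by linear_combination (α * ε * R) * hcoupling
      _ ≤ R := corner_bound_fst hη₀ hα hε hR.le hq₀.le hq_half
          (by linarith [(le_div_iff₀ (by positivity)).1 hεσ]) ((div_le_iff₀' hη₀).1 hR1) hεα
  · calc _ = (1 - c * ε / 2) * (q * R) + 3 / c * L ^ 2 * α ^ 2 * ε * (R + C ^ 2)
          + 8 * ε ^ 2 * σ ^ 2 * (R + q * R + P) := by ring
      _ ≤ q * R := corner_bound_snd hε (by positivity) hR.le hq_half hsmall (by
          rw [div_mul_eq_mul_div, div_le_iff₀' (by positivity)] at hR2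
          linear_combination hR2 / 4)

/-- Sequence-level (induction) form of Theorem 1 (lem1-8) of the paper,
quantization of type 2: uniform boundedness of the QDGD iterates. -/
theorem stmt14 (L μ c α ε σ : ℝ) (C P : ℝ)
    (hL : 0 < L) (hμ : 0 < μ) (hc : 0 < c) (hα : 0 < α) (hε : 0 < ε)
    (hσ : 0 < σ) (hC : 0 ≤ C) (hP : 0 ≤ P)
    (η q : ℝ) (hη : η = μ * L / (μ + L)) (hq : q = η ^ 2 / (L * (η + 2 * L)))
    (hαε : α * ε ≤ 2 / (μ + L)) (hεc : ε ≤ 1 / (2 * c)) (hεα : ε ≤ α)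
    (hεσ : ε ≤ η * α / (4 * σ ^ 2))
    (hsmall : 3 / c * L ^ 2 * α ^ 2 + 16 * ε * σ ^ 2 ≤ q * c / 4)
    (R : ℝ) (hR : 0 < R) (hR1 : 8 * σ ^ 2 * P / η ≤ R)
    (hR2 : 4 / (q * c) * (3 * L ^ 2 * α ^ 2 / c * C ^ 2 + 8 * ε * σ ^ 2 * P) ≤ R)
    (A B : ℕ → ℝ) (hA0 : ∀ k, 0 ≤ A k) (hB0 : ∀ k, 0 ≤ B k)
    (hA0R : A 0 ≤ R) (hB0R : B 0 ≤ q * R)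
    (hrecA : ∀ k, A (k + 1) ≤ (1 - 3 * η * α * ε / 2) * A k
      + L * α * ε * (1 / 4 + L / (2 * η)) * B k
      + 2 * ε ^ 2 * σ ^ 2 * (A k + B k + P))
    (hrecB : ∀ k, B (k + 1) ≤ (1 - c * ε / 2) * B k
      + 3 * L ^ 2 * α ^ 2 * ε / c * (A k + C ^ 2)
      + 8 * ε ^ 2 * σ ^ 2 * (A k + B k + P))
    (hμL : μ ≤ L) :
    ∀ k, A k ≤ R ∧ B k ≤ q * R :=
  stmt14_general L μ c α ε σ C P hL hμ hc hα hε hσ η q hη hq hαε hεc hεα hεσ hsmall R hR hR1 hR2 A B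
    hA0R hB0R hrecA hrecB
end
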